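/- arXiv:2206.10204 — 3 statements merged into one kernel-verified Lean document; each statement's English description precedes it below -/
import Mathlib

section
/- Let d ≥ 1 and let S ⊂ ℝᵈ be a measurable set satisfying the Geometric Control Condition. Then S is thick. -/
open MeasureTheory

/-- `S ⊆ ℝᵈ` satisfies the Geometric Control Condition if there are `δ, L > 0` such
that every straight line segment of length `L` meets `S` in one-dimensional measure
at least `δ`. -/
def SatisfiesGCC {d : ℕ} (S : Set (EuclideanSpace ℝ (Fin d))) : Prop :=
  ∃ δ > (0 : ℝ), ∃ L > (0 : ℝ), ∀ (x v : EuclideanSpace ℝ (Fin d)), ‖v‖ = 1 →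
    ENNReal.ofReal δ ≤ volume {t : ℝ | t ∈ Set.Icc (0 : ℝ) L ∧ x + t • v ∈ S}

/-- A set `S ⊆ ℝᵈ` is thick if there are `γ, ρ > 0` such that
`vol (S ∩ B_ρ(x)) ≥ γ` for all `x`. -/
def IsThick {d : ℕ} (S : Set (EuclideanSpace ℝ (Fin d))) : Prop :=
  ∃ γ > (0 : ℝ), ∃ ρ > (0 : ℝ), ∀ x : EuclideanSpace ℝ (Fin d),
    ENNReal.ofReal γ ≤ volume (S ∩ Metric.ball x ρ)

/-! Averaging the GCC bound over starting points `y ∈ B_r(x)` and swapping the integrals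
(Tonelli) bounds `δ · vol(B_r(x))` by `∫₀ᴸ vol(S ∩ B_r(x + t v)) dt`, and each of these balls
lies in `B_{r+L}(x)`. Hence `vol(S ∩ B_{r+L}(x)) ≥ δ · vol(B_r) / L` uniformly in `x`. -/

open Metric Set
open scoped ENNReal

section Averaging

variable {E : Type*} [NormedAddCommGroup E] [MeasurableSpace E] [BorelSpace E] (μ : Measure E)
  {S : Set E}

lemma volume_segment_inter_eq_setLIntegral_indicator [NormedSpace ℝ E] (hS : MeasurableSet S)
    (y v : E) (L : ℝ) :
    volume {t : ℝ | t ∈ Icc 0 L ∧ y + t • v ∈ S} = ∫⁻ t in Icc 0 L, S.indicator 1 (y + t • v) := by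
  have hpre : MeasurableSet ((fun t : ℝ => y + t • v) ⁻¹' S) :=
    (continuous_const.add (continuous_id.smul continuous_const)).measurable hS
  calc volume {t : ℝ | t ∈ Icc 0 L ∧ y + t • v ∈ S}
      = volume.restrict (Icc 0 L) ((fun t : ℝ => y + t • v) ⁻¹' S) := by
        rw [Measure.restrict_apply hpre, inter_comm]; rfl
    _ = _ := (lintegral_indicator_one hpre).symm

lemma setLIntegral_ball_indicator_add [μ.IsAddRightInvariant] (hS : MeasurableSet S)
    (x w : E) (r : ℝ) :
    ∫⁻ y in ball x r, S.indicator 1 (y + w) ∂μ = μ (S ∩ ball (x + w) r) := by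
  have hpre : (fun y => y + w) ⁻¹' (S ∩ ball (x + w) r) = (fun y => y + w) ⁻¹' S ∩ ball x r := by
    ext y; simp
  rw [← measure_preimage_add_right μ w, hpre, ← Measure.restrict_apply' measurableSet_ball,
    ← lintegral_indicator_one (measurable_add_const w hS)]
  rfl

lemma setLIntegral_ball_volume_segment_inter_le [NormedSpace ℝ E] [SecondCountableTopology E]
    [μ.IsAddRightInvariant] [SFinite μ] (hS : MeasurableSet S) (x v : E) (r L : ℝ) :
    ∫⁻ y in ball x r, volume {t : ℝ | t ∈ Icc 0 L ∧ y + t • v ∈ S} ∂μ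
      ≤ ENNReal.ofReal L * μ (S ∩ ball x (r + L * ‖v‖)) := by
  have hmeas : Measurable fun p : E × ℝ => S.indicator (1 : E → ℝ≥0∞) (p.1 + p.2 • v) :=
    (measurable_one.indicator hS).comp (measurable_fst.add (measurable_snd.smul_const v))
  simp_rw [volume_segment_inter_eq_setLIntegral_indicator hS]
  rw [lintegral_lintegral_swap hmeas.aemeasurable]
  calc ∫⁻ t in Icc 0 L, ∫⁻ y in ball x r, S.indicator 1 (y + t • v) ∂μ
      = ∫⁻ t in Icc 0 L, μ (S ∩ ball (x + t • v) r) := by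
        simp_rw [setLIntegral_ball_indicator_add μ hS]
    _ ≤ ∫⁻ _ in Icc 0 L, μ (S ∩ ball x (r + L * ‖v‖)) := by
        refine setLIntegral_mono measurable_const fun t ht =>
          measure_mono (inter_subset_inter_right _ (ball_subset_ball' ?_))
        rw [dist_self_add_left, norm_smul, Real.norm_of_nonneg ht.1]
        gcongr
        exact ht.2
    _ = ENNReal.ofReal L * μ (S ∩ ball x (r + L * ‖v‖)) := by
        rw [setLIntegral_const, Real.volume_Icc, sub_zero, mul_comm]

lemma ofReal_mul_measure_ball_le_of_forall_segment [NormedSpace ℝ E] [SecondCountableTopology E]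
    [μ.IsAddRightInvariant] [SFinite μ] (hS : MeasurableSet S) {v : E} {δ L : ℝ}
    (hseg : ∀ y, ENNReal.ofReal δ ≤ volume {t : ℝ | t ∈ Icc 0 L ∧ y + t • v ∈ S}) (x : E) (r : ℝ) :
    ENNReal.ofReal δ * μ (ball x r) ≤ ENNReal.ofReal L * μ (S ∩ ball x (r + L * ‖v‖)) :=
  calc ENNReal.ofReal δ * μ (ball x r) = ∫⁻ _ in ball x r, ENNReal.ofReal δ ∂μ :=
        (setLIntegral_const _ _).symm
    _ ≤ ∫⁻ y in ball x r, volume {t : ℝ | t ∈ Icc 0 L ∧ y + t • v ∈ S} ∂μ := lintegral_mono hseg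
    _ ≤ _ := setLIntegral_ball_volume_segment_inter_le μ hS x v r L

end Averaging

theorem stmt3 (d : ℕ) (hd : 1 ≤ d) (S : Set (EuclideanSpace ℝ (Fin d)))
    (hS : MeasurableSet S) (hGCC : SatisfiesGCC S) : IsThick S := by
  obtain ⟨δ, hδ, L, hL, hseg⟩ := hGCC
  set v := EuclideanSpace.single (⟨0, hd⟩ : Fin d) (1 : ℝ)
  have hv : ‖v‖ = 1 := by simp [v]
  have hpos :
      0 < ENNReal.ofReal δ * volume (ball (0 : EuclideanSpace ℝ (Fin d)) 1) / ENNReal.ofReal L :=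
    ENNReal.div_pos (mul_ne_zero (ENNReal.ofReal_pos.2 hδ).ne' (measure_ball_pos _ _ one_pos).ne')
      ENNReal.ofReal_ne_top
  obtain ⟨γ, -, hγ, hγ_le⟩ := ENNReal.lt_iff_exists_real_btwn.1 hpos
  refine ⟨γ, ENNReal.ofReal_pos.1 hγ, 1 + L, by positivity, fun x => hγ_le.le.trans ?_⟩
  have hball := ofReal_mul_measure_ball_le_of_forall_segment volume hS (fun y => hseg y v hv) x 1
  rw [hv, mul_one, Measure.addHaar_ball_center, mul_comm (ENNReal.ofReal L)] at hball
  exact ENNReal.div_le_of_le_mul hball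
end

section
/- Let n ≥ 1. There is a constant c > 0, depending only on n, such that for every δ > 0 there is a constant C̃ > 0, depending only on n and δ, with the following property: for every R ≥ c/δ, every set Γ ⊂ ℝⁿ with gap(Γ) ≥ δ, and every finitely supported family of complex coefficients (α_γ)_{γ ∈ Γ}, one has ∫_{B_R(0)} |Σ_{γ ∈ Γ} α_γ · exp(i⟨γ, x⟩)|² dx ≥ C̃ · Σ_{γ ∈ Γ} |α_γ|². -/
open MeasureTheory

/-- The gap of a set `X`: the infimum of distances between distinct points of `X`
(`∞` if `X` has at most one element). -/
noncomputable def setGap {n : ℕ} (X : Set (EuclideanSpace ℝ (Fin n))) : ENNReal :=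
  ⨅ (x : X) (y : X) (_ : x ≠ y), edist (x : EuclideanSpace ℝ (Fin n)) y

/-!
Weight the integral by `w(x) = ∏ⱼ (a - |xⱼ|)₊`, which is at most `aⁿ` and vanishes outside the
cube `[-a, a]ⁿ ⊆ B_R(0)`. Expanding `|f|²`, `∫ w |f|² = ∑ α_γ conj α_γ' ŵ(γ - γ')` with the
explicit, nonnegative Fourier transform `ŵ(ξ) = ∏ⱼ 2 (1 - cos (a ξⱼ)) / ξⱼ²`, so that `ŵ(0) = a²ⁿ`
and `ŵ(ξ) ≤ ∏ⱼ min(a², 4 / ξⱼ²)`. Rounding the differences `γ - γ'` to the grid `s ℤⁿ` is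
injective on a `δ`-separated set as soon as `√n s < δ`, so each off-diagonal row sum of `ŵ` is
at most `(a² + Q)ⁿ - a²ⁿ` with `Q = 16 s⁻² ∑_{m ≠ 0} m⁻²`. For `a s` large this is at most
`a²ⁿ / 2`, and Schur's test gives `∫ w |f|² ≥ a²ⁿ / 2 ∑ |α_γ|²`.
-/

open Complex ComplexConjugate

noncomputable def tent (a t : ℝ) : ℝ := max (a - |t|) 0

noncomputable def tentFourier (a b : ℝ) : ℝ :=
  if b = 0 then a ^ 2 else 2 * (1 - Real.cos (a * b)) / b ^ 2

lemma continuous_tent (a : ℝ) : Continuous (tent a) := by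
  unfold tent
  fun_prop

lemma tent_nonneg (a t : ℝ) : 0 ≤ tent a t := le_max_right _ _

lemma tent_le {a : ℝ} (ha : 0 ≤ a) (t : ℝ) : tent a t ≤ a := by
  simp [tent, ha]

lemma tent_neg (a t : ℝ) : tent a (-t) = tent a t := by simp [tent]

lemma tent_of_nonneg {a t : ℝ} (ht : 0 ≤ t) (hta : t ≤ a) : tent a t = a - t := by
  simp [tent, abs_of_nonneg ht, hta]

lemma tent_eq_zero {a t : ℝ} (h : a ≤ |t|) : tent a t = 0 := by
  simp [tent, h]

lemma integral_two_mul_sub_mul_cos (a b : ℝ) :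
    ∫ u in 0..a, 2 * ((a - u) * Real.cos (b * u)) = tentFourier a b := by
  rcases eq_or_ne b 0 with rfl | hb
  · simp only [zero_mul, Real.cos_zero, mul_one, intervalIntegral.integral_const_mul]
    rw [intervalIntegral.integral_sub intervalIntegrable_const
      intervalIntegral.intervalIntegrable_id]
    simp [tentFourier]
    ring
  · have hderiv : ∀ u : ℝ, HasDerivAt
        (fun u => 2 * ((a - u) * Real.sin (b * u) / b - Real.cos (b * u) / b ^ 2))
        (2 * ((a - u) * Real.cos (b * u))) u := by
      intro u
      have hbu : HasDerivAt (fun u => b * u) b u := by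
        simpa using (hasDerivAt_id u).const_mul b
      refine ((((hasDerivAt_id' u).const_sub a).mul hbu.sin).div_const b |>.sub
        (hbu.cos.div_const (b ^ 2))).const_mul 2 |>.congr_deriv ?_
      field_simp
      ring
    rw [intervalIntegral.integral_eq_sub_of_hasDerivAt (fun u _ => hderiv u)
      (by apply Continuous.intervalIntegrable; fun_prop)]
    simp [tentFourier, hb, mul_comm a b]
    field_simp
    ring

lemma integral_tent_mul_exp {a : ℝ} (ha : 0 ≤ a) (b : ℝ) :
    ∫ t, (tent a t : ℂ) * cexp (b * t * I) = tentFourier a b := by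
  set f : ℝ → ℂ := fun t => (tent a t : ℂ) * cexp (b * t * I)
  have hf : Continuous f := by
    have := continuous_tent a
    fun_prop
  have hvanish : ∀ t ∉ Set.Ioc (-a) a, f t = 0 := by
    intro t ht
    rw [Set.mem_Ioc, not_and_or, not_lt, not_le] at ht
    have : a ≤ |t| := le_abs.2 (ht.symm.imp le_of_lt fun h => by linarith)
    simp [f, tent_eq_zero this]
  have hcos : ∀ u ∈ Set.uIcc 0 a,
      f u + f (-u) = ((2 * ((a - u) * Real.cos (b * u)) : ℝ) : ℂ) := by
    intro u hu
    rw [Set.uIcc_of_le ha] at hu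
    simp only [f, tent_neg, tent_of_nonneg hu.1 hu.2]
    push_cast
    rw [Complex.cos]
    ring_nf
  calc ∫ t, f t = ∫ t in (-a)..a, f t := by
        rw [intervalIntegral.integral_of_le (by linarith),
          setIntegral_eq_integral_of_forall_compl_eq_zero hvanish]
    _ = ∫ u in 0..a, (f u + f (-u)) := by
        rw [← intervalIntegral.integral_add_adjacent_intervals (b := 0)
          (hf.intervalIntegrable _ _) (hf.intervalIntegrable _ _),
          intervalIntegral.integral_add (g := fun u => f (-u)) (hf.intervalIntegrable _ _)
          ((hf.comp continuous_neg).intervalIntegrable _ _), intervalIntegral.integral_comp_neg f]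
        simp only [neg_zero]
        ring
    _ = tentFourier a b := by
        rw [intervalIntegral.integral_congr hcos, intervalIntegral.integral_ofReal,
          integral_two_mul_sub_mul_cos]

lemma tentFourier_nonneg (a b : ℝ) : 0 ≤ tentFourier a b := by
  unfold tentFourier
  split_ifs
  · positivity
  · have := Real.cos_le_one (a * b)
    exact div_nonneg (by linarith) (sq_nonneg b)

lemma tentFourier_le_sq (a b : ℝ) : tentFourier a b ≤ a ^ 2 := by
  unfold tentFourier
  split_ifs with hb
  · rfl
  · have := Real.one_sub_sq_div_two_le_cos (x := a * b)
    rw [div_le_iff₀ (by positivity)]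
    nlinarith

lemma tentFourier_le_four_div_sq (a : ℝ) {b : ℝ} (hb : b ≠ 0) : tentFourier a b ≤ 4 / b ^ 2 := by
  rw [tentFourier, if_neg hb]
  have := Real.neg_one_le_cos (a * b)
  gcongr
  linarith

lemma tentFourier_neg (a b : ℝ) : tentFourier a (-b) = tentFourier a b := by
  simp [tentFourier, mul_neg]

section ExpSum
variable {E : Type*} [NormedAddCommGroup E] [InnerProductSpace ℝ E]

noncomputable def expSum (t : Finset E) (c : E → ℂ) (x : E) : ℂ :=
  ∑ γ ∈ t, c γ * cexp (inner ℝ γ x * I)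

lemma continuous_expSum (t : Finset E) (c : E → ℂ) : Continuous (expSum t c) := by
  unfold expSum
  fun_prop

lemma exp_inner_mul_conj (γ γ' x : E) :
    cexp (inner ℝ γ x * I) * conj (cexp (inner ℝ γ' x * I)) = cexp (inner ℝ (γ - γ') x * I) := by
  rw [← Complex.exp_conj, ← Complex.exp_add, inner_sub_left]
  simp only [map_mul, Complex.conj_ofReal, Complex.conj_I, Complex.ofReal_sub]
  ring_nf

lemma norm_sq_expSum (t : Finset E) (c : E → ℂ) (x : E) :
    (‖expSum t c x‖ ^ 2 : ℂ) =
      ∑ γ ∈ t, ∑ γ' ∈ t, c γ * conj (c γ') * cexp (inner ℝ (γ - γ') x * I) := by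
  rw [← Complex.mul_conj', expSum, map_sum, Finset.sum_mul_sum]
  refine Finset.sum_congr rfl fun γ _ => Finset.sum_congr rfl fun γ' _ => ?_
  rw [map_mul, ← exp_inner_mul_conj]
  ring

lemma integral_mul_norm_sq_expSum [MeasurableSpace E] {μ : Measure E} {w : E → ℝ}
    (hw : ∀ ξ, Integrable (fun x => (w x : ℂ) * cexp (inner ℝ ξ x * I)) μ)
    (t : Finset E) (c : E → ℂ) :
    ∫ x, w x * ‖expSum t c x‖ ^ 2 ∂μ =
      (∑ γ ∈ t, ∑ γ' ∈ t,
        c γ * conj (c γ') * ∫ x, (w x : ℂ) * cexp (inner ℝ (γ - γ') x * I) ∂μ).re := by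
  have hpoint : ∀ x, ((w x * ‖expSum t c x‖ ^ 2 : ℝ) : ℂ) = ∑ γ ∈ t, ∑ γ' ∈ t,
      c γ * conj (c γ') * ((w x : ℂ) * cexp (inner ℝ (γ - γ') x * I)) := fun x => by
    simp only [Complex.ofReal_mul, Complex.ofReal_pow, norm_sq_expSum, Finset.mul_sum]
    exact Finset.sum_congr rfl fun γ _ => Finset.sum_congr rfl fun γ' _ => by ring
  have hint : ∀ γ γ', Integrable
      (fun x => c γ * conj (c γ') * ((w x : ℂ) * cexp (inner ℝ (γ - γ') x * I))) μ :=
    fun γ γ' => (hw _).const_mul _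
  rw [← Complex.ofReal_re (∫ x, _ ∂μ), ← integral_complex_ofReal, funext hpoint,
    integral_finsetSum _ fun γ _ => integrable_finsetSum _ fun γ' _ => hint γ γ']
  simp_rw [integral_finsetSum _ fun γ' _ => hint _ γ', integral_const_mul]

end ExpSum

lemma sub_mul_sum_norm_sq_le_sum_re_mul {κ : Type*} [DecidableEq κ] (t : Finset κ) (c : κ → ℂ)
    {K : κ → κ → ℝ} {D r : ℝ} (hsymm : ∀ x y, K x y = K y x) (hdiag : ∀ x ∈ t, K x x = D)
    (hrow : ∀ x ∈ t, ∑ y ∈ t.erase x, |K x y| ≤ r) :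
    (D - r) * ∑ x ∈ t, ‖c x‖ ^ 2 ≤ ∑ x ∈ t, ∑ y ∈ t, (c x * conj (c y)).re * K x y := by
  set k : κ → κ → ℝ := fun x y => if x = y then 0 else |K x y| with hk
  have hk_symm : ∀ x y, k x y = k y x := fun x y => by simp only [hk, eq_comm, hsymm]
  have hk_row : ∀ x ∈ t, ∑ y ∈ t, k x y ≤ r := fun x hx => by
    rw [← Finset.sum_erase_add _ _ hx, show k x x = 0 from if_pos rfl, add_zero]
    refine le_of_eq_of_le (Finset.sum_congr rfl fun y hy => ?_) (hrow x hx)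
    exact if_neg (Finset.ne_of_mem_erase hy).symm
  have hpoint : ∀ x ∈ t, ∀ y ∈ t, (if x = y then ‖c x‖ ^ 2 * D else 0)
      - k x y * ‖c x‖ ^ 2 / 2 - k x y * ‖c y‖ ^ 2 / 2 ≤ (c x * conj (c y)).re * K x y := by
    intro x hx y _
    by_cases hxy : x = y
    · subst hxy
      rw [if_pos rfl, Complex.mul_conj', ← Complex.ofReal_pow, Complex.ofReal_re, hdiag x hx,
        show k x x = 0 from if_pos rfl]
      simp
    · have hre : |(c x * conj (c y)).re| ≤ ‖c x‖ * ‖c y‖ :=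
        (abs_re_le_norm _).trans (by simp)
      have hneg : -(|(c x * conj (c y)).re| * |K x y|) ≤ (c x * conj (c y)).re * K x y := by
        rw [← abs_mul]
        exact neg_abs_le _
      simp only [hk, if_neg hxy]
      nlinarith [sq_nonneg (‖c x‖ - ‖c y‖), abs_nonneg (K x y),
        mul_le_mul_of_nonneg_right hre (abs_nonneg (K x y))]
  have hleft : ∑ x ∈ t, ∑ y ∈ t, k x y * ‖c x‖ ^ 2 ≤ r * ∑ x ∈ t, ‖c x‖ ^ 2 := by
    rw [Finset.mul_sum]
    refine Finset.sum_le_sum fun x hx => ?_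
    rw [← Finset.sum_mul]
    exact mul_le_mul_of_nonneg_right (hk_row x hx) (sq_nonneg _)
  have hright : ∑ x ∈ t, ∑ y ∈ t, k x y * ‖c y‖ ^ 2 ≤ r * ∑ x ∈ t, ‖c x‖ ^ 2 := by
    rw [Finset.sum_comm]
    simp_rw [hk_symm _ (_ : κ)]
    exact hleft
  have hdiag_sum : ∑ x ∈ t, ∑ y ∈ t, (if x = y then ‖c x‖ ^ 2 * D else 0)
      = D * ∑ x ∈ t, ‖c x‖ ^ 2 := by
    simp [Finset.sum_ite_eq, Finset.mul_sum, mul_comm]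
  have hsum := Finset.sum_le_sum fun x hx => Finset.sum_le_sum fun y hy => hpoint x hx y hy
  simp only [Finset.sum_sub_distrib, ← Finset.sum_div] at hsum
  linarith

variable {ι : Type*} [Fintype ι]

lemma EuclideanSpace.norm_le_sqrt_card_mul {x : EuclideanSpace ℝ ι} {r : ℝ} (hr : 0 ≤ r)
    (h : ∀ j, |x j| ≤ r) : ‖x‖ ≤ √(Fintype.card ι) * r := by
  rw [EuclideanSpace.norm_eq, ← Real.sqrt_sq hr, ← Real.sqrt_mul (Nat.cast_nonneg _)]
  gcongr
  calc ∑ j, ‖x j‖ ^ 2 ≤ ∑ _j : ι, r ^ 2 := by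
        gcongr
        exact Real.norm_eq_abs _ ▸ h _
    _ = _ := by simp

noncomputable def tentProd (a : ℝ) (x : EuclideanSpace ℝ ι) : ℝ := ∏ j, tent a (x j)

lemma continuous_tentProd (a : ℝ) : Continuous (tentProd (ι := ι) a) := by
  unfold tentProd
  have := continuous_tent a
  fun_prop

lemma tentProd_le {a : ℝ} (ha : 0 ≤ a) (x : EuclideanSpace ℝ ι) :
    tentProd a x ≤ a ^ Fintype.card ι := by
  rw [← Finset.card_univ, ← Finset.prod_const]
  exact Finset.prod_le_prod (fun j _ => tent_nonneg a (x j)) fun j _ => tent_le ha (x j)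

lemma norm_le_of_tentProd_ne_zero {a : ℝ} (ha : 0 ≤ a) {x : EuclideanSpace ℝ ι}
    (hx : tentProd a x ≠ 0) : ‖x‖ ≤ √(Fintype.card ι) * a := by
  refine EuclideanSpace.norm_le_sqrt_card_mul ha fun j => ?_
  by_contra! h
  exact hx (Finset.prod_eq_zero (Finset.mem_univ j) (tent_eq_zero h.le))

lemma integrable_tentProd_mul_exp {a : ℝ} (ha : 0 ≤ a) (ξ : EuclideanSpace ℝ ι) :
    Integrable fun x => (tentProd a x : ℂ) * cexp (inner ℝ ξ x * I) := by
  have := continuous_tentProd (ι := ι) a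
  refine Continuous.integrable_of_hasCompactSupport (by fun_prop) ?_
  refine HasCompactSupport.intro (isCompact_closedBall 0 (√(Fintype.card ι) * a)) fun x hx => ?_
  by_contra h
  exact hx (mem_closedBall_zero_iff.mpr
    (norm_le_of_tentProd_ne_zero ha (by contrapose! h; simp [h])))

lemma integral_tentProd_mul_exp {a : ℝ} (ha : 0 ≤ a) (ξ : EuclideanSpace ℝ ι) :
    ∫ x, (tentProd a x : ℂ) * cexp (inner ℝ ξ x * I) = ∏ j, tentFourier a (ξ j) := by
  rw [← (EuclideanSpace.volume_preserving_symm_measurableEquiv_toLp ι).symm.integral_comp']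
  have hfactor : ∀ y : ι → ℝ,
      (tentProd a (WithLp.toLp 2 y) : ℂ) * cexp (inner ℝ ξ (WithLp.toLp 2 y) * I) =
        ∏ j, (tent a (y j) : ℂ) * cexp (ξ j * y j * I) := by
    intro y
    simp only [tentProd, PiLp.inner_apply, Finset.prod_mul_distrib, Complex.ofReal_prod,
      Complex.ofReal_sum, Finset.sum_mul, Complex.exp_sum]
    simp [mul_comm]
  simp only [MeasurableEquiv.symm_symm, MeasurableEquiv.coe_toLp, hfactor]
  rw [volume_pi,
    integral_fintype_prod_eq_prod (f := fun j t => (tent a t : ℂ) * cexp (ξ j * t * I))]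
  push_cast
  exact Finset.prod_congr rfl fun j _ => integral_tent_mul_exp ha (ξ j)

lemma sum_prod_le_tsum_pow_sub {κ : Type*} {F : κ → ℝ} (hF : ∀ m, 0 ≤ F m) (hFs : Summable F)
    (m₀ : κ) {K : Finset (ι → κ)} (hK : (fun _ => m₀) ∉ K) :
    ∑ k ∈ K, ∏ j, F (k j) ≤ (∑' m, F m) ^ Fintype.card ι - F m₀ ^ Fintype.card ι := by
  classical
  set B : ι → Finset κ := fun j => (insert (fun _ => m₀) K).image (· j)
  have hsub : insert (fun _ => m₀) K ⊆ Fintype.piFinset B := fun k hk =>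
    Fintype.mem_piFinset.2 fun j => Finset.mem_image_of_mem _ hk
  calc ∑ k ∈ K, ∏ j, F (k j)
      = ∑ k ∈ insert (fun _ => m₀) K, ∏ j, F (k j) - F m₀ ^ Fintype.card ι := by
        rw [Finset.sum_insert hK, Finset.prod_const, Finset.card_univ]
        ring
    _ ≤ ∑ k ∈ Fintype.piFinset B, ∏ j, F (k j) - F m₀ ^ Fintype.card ι :=
        sub_le_sub_right (Finset.sum_le_sum_of_subset_of_nonneg hsub fun k _ _ =>
          Finset.prod_nonneg fun j _ => hF _) _
    _ = ∏ j, ∑ m ∈ B j, F m - F m₀ ^ Fintype.card ι := by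
        rw [Finset.prod_univ_sum]
    _ ≤ (∑' m, F m) ^ Fintype.card ι - F m₀ ^ Fintype.card ι := by
        rw [← Finset.card_univ, ← Finset.prod_const (∑' m, F m)]
        exact sub_le_sub_right (Finset.prod_le_prod
          (fun j _ => Finset.sum_nonneg fun m _ => hF m)
          fun j _ => hFs.sum_le_tsum _ fun m _ => hF m) _

lemma abs_sub_le_one_of_round_eq {u v : ℝ} (h : round u = round v) : |u - v| ≤ 1 := by
  have hu := abs_sub_round u
  have hv := abs_sub_round v
  rw [h] at hu
  have := abs_sub_le u (round v) v
  rw [abs_sub_comm (round v : ℝ)] at this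
  linarith

lemma EuclideanSpace.norm_sub_le_of_round_div_eq {s : ℝ} (hs : 0 < s) {ξ η : EuclideanSpace ℝ ι}
    (h : ∀ j, round (ξ j / s) = round (η j / s)) : ‖ξ - η‖ ≤ √(Fintype.card ι) * s := by
  refine EuclideanSpace.norm_le_sqrt_card_mul hs.le fun j => ?_
  have := abs_sub_le_one_of_round_eq (h j)
  rwa [← sub_div, abs_div, abs_of_pos hs, div_le_one hs] at this

lemma sum_erase_abs_le_of_le_prod_round {t : Finset (EuclideanSpace ℝ ι)} {δ s : ℝ}
    (ht : (t : Set (EuclideanSpace ℝ ι)).Pairwise fun x y => δ ≤ dist x y) (hs : 0 < s)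
    (hsδ : √(Fintype.card ι) * s < δ) {F : ℤ → ℝ} (hF : ∀ m, 0 ≤ F m) (hFs : Summable F)
    {κ : EuclideanSpace ℝ ι → ℝ} (hκ : ∀ ξ, |κ ξ| ≤ ∏ j, F (round (ξ j / s)))
    {γ : EuclideanSpace ℝ ι} (hγ : γ ∈ t) :
    ∑ γ' ∈ t.erase γ, |κ (γ - γ')| ≤ (∑' m, F m) ^ Fintype.card ι - F 0 ^ Fintype.card ι := by
  classical
  set q : EuclideanSpace ℝ ι → ι → ℤ := fun γ' j => round ((γ - γ') j / s)
  have hinj : Set.InjOn q t := by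
    intro x hx y hy hxy
    by_contra hne
    have hclose := EuclideanSpace.norm_sub_le_of_round_div_eq hs (congrFun hxy)
    rw [sub_sub_sub_cancel_left, ← dist_eq_norm] at hclose
    linarith [ht hy hx (Ne.symm hne)]
  have hqγ : q γ = fun _ => 0 := by
    ext j
    simp [q]
  have h0 : (fun _ => 0) ∉ (t.erase γ).image q := by
    intro hmem
    obtain ⟨γ', hγ', hq⟩ := Finset.mem_image.1 hmem
    exact Finset.ne_of_mem_erase hγ'
      (hinj (Finset.mem_of_mem_erase hγ') hγ (hq.trans hqγ.symm))
  calc ∑ γ' ∈ t.erase γ, |κ (γ - γ')| ≤ ∑ γ' ∈ t.erase γ, ∏ j, F (q γ' j) :=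
        Finset.sum_le_sum fun γ' _ => hκ _
    _ = ∑ k ∈ (t.erase γ).image q, ∏ j, F (k j) :=
        (Finset.sum_image (f := fun k => ∏ j, F (k j))
          (hinj.mono (Finset.erase_subset γ t))).symm
    _ ≤ _ := sum_prod_le_tsum_pow_sub hF hFs 0 h0

noncomputable def tentMajorant (a s : ℝ) : ℤ → ℝ :=
  Function.update (fun m => 16 / (s * m) ^ 2) 0 (a ^ 2)

lemma tentMajorant_nonneg (a s : ℝ) (m : ℤ) : 0 ≤ tentMajorant a s m := by
  unfold tentMajorant
  rcases eq_or_ne m 0 with rfl | hm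
  · simp [sq_nonneg]
  · rw [Function.update_of_ne hm]
    positivity

lemma hasSum_tentMajorant (a s : ℝ) :
    HasSum (tentMajorant a s) (a ^ 2 + 16 / s ^ 2 * ∑' m : ℤ, 1 / (m : ℝ) ^ 2) := by
  have h := ((Real.summable_one_div_int_pow.2 one_lt_two).hasSum.mul_left (16 / s ^ 2)).update
    0 (a ^ 2)
  have hfun : tentMajorant a s = Function.update (fun m : ℤ => 16 / s ^ 2 * (1 / (m : ℝ) ^ 2)) 0
      (a ^ 2) := by
    unfold tentMajorant
    congr 1
    ext m
    ring
  rw [hfun]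
  simpa using h

lemma abs_tentFourier_le {a s : ℝ} (hs : 0 < s) (b : ℝ) :
    |tentFourier a b| ≤ tentMajorant a s (round (b / s)) := by
  rw [abs_of_nonneg (tentFourier_nonneg a b), tentMajorant]
  set m := round (b / s) with hm
  rcases eq_or_ne m 0 with hm0 | hm0
  · rw [hm0, Function.update_self]
    exact tentFourier_le_sq a b
  · rw [Function.update_of_ne hm0]
    have hb : b ≠ 0 := by
      rintro rfl
      simp [hm] at hm0
    have hround : |b / s - m| ≤ 1 / 2 := abs_sub_round _
    have hm1 : (1 : ℝ) ≤ |(m : ℝ)| := by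
      rw [← Int.cast_abs]
      exact_mod_cast Int.one_le_abs hm0
    have hmb : |(m : ℝ)| * s ≤ 2 * |b| := by
      have := abs_sub_abs_le_abs_sub (m : ℝ) (b / s)
      rw [abs_sub_comm, abs_div, abs_of_pos hs] at this
      have := (le_div_iff₀ hs).1 (show |(m : ℝ)| / 2 ≤ |b| / s by linarith)
      linarith
    calc tentFourier a b ≤ 4 / b ^ 2 := tentFourier_le_four_div_sq a hb
      _ ≤ 16 / (s * m) ^ 2 := by
        rw [div_le_div_iff₀ (by positivity) (by positivity)]
        have := pow_le_pow_left₀ (by positivity) hmb 2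
        rw [mul_pow, mul_pow, sq_abs, sq_abs] at this
        nlinarith

lemma add_pow_le_of_four_mul_le {P Q : ℝ} (hP : 0 < P) (hQ : 0 ≤ Q) {n : ℕ}
    (h : 4 * n * Q ≤ P) : (P + Q) ^ n ≤ 3 / 2 * P ^ n := by
  have hx : n * (Q / P) ≤ 1 / 4 := by
    rw [← mul_div_assoc, div_le_iff₀ hP]
    linarith
  have hx0 : 0 ≤ n * (Q / P) := by positivity
  have hexp := Real.abs_exp_sub_one_le (x := n * (Q / P)) (by rw [abs_of_nonneg hx0]; linarith)
  rw [abs_of_nonneg hx0, abs_le] at hexp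
  calc (P + Q) ^ n = P ^ n * (1 + Q / P) ^ n := by
        rw [← mul_pow, mul_add, mul_one, mul_div_cancel₀ _ hP.ne']
    _ ≤ P ^ n * Real.exp (n * (Q / P)) := by
        rw [Real.exp_nat_mul]
        gcongr
        linarith [Real.add_one_le_exp (Q / P)]
    _ ≤ 3 / 2 * P ^ n := by
        rw [mul_comm]
        gcongr
        linarith

theorem ingham_inequality_tentProd {t : Finset (EuclideanSpace ℝ ι)} {δ a s : ℝ}
    (ht : (t : Set (EuclideanSpace ℝ ι)).Pairwise fun x y => δ ≤ dist x y) (ha : 0 < a)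
    (hs : 0 < s) (hsδ : √(Fintype.card ι) * s < δ)
    (has : 64 * Fintype.card ι * ∑' m : ℤ, 1 / (m : ℝ) ^ 2 ≤ (a * s) ^ 2)
    (c : EuclideanSpace ℝ ι → ℂ) :
    (a ^ 2) ^ Fintype.card ι / 2 * ∑ γ ∈ t, ‖c γ‖ ^ 2 ≤
      ∫ x, tentProd a x * ‖expSum t c x‖ ^ 2 := by
  classical
  set N := Fintype.card ι
  set S := a ^ 2 + 16 / s ^ 2 * ∑' m : ℤ, 1 / (m : ℝ) ^ 2
  set W : EuclideanSpace ℝ ι → ℝ := fun ξ => ∏ j, tentFourier a (ξ j)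
  have hrow : ∀ γ ∈ t, ∑ γ' ∈ t.erase γ, |W (γ - γ')| ≤ S ^ N - (a ^ 2) ^ N := by
    intro γ hγ
    have hmaj : ∀ ξ, |W ξ| ≤ ∏ j, tentMajorant a s (round (ξ j / s)) := fun ξ => by
      rw [Finset.abs_prod]
      exact Finset.prod_le_prod (fun j _ => abs_nonneg _) fun j _ => abs_tentFourier_le hs _
    have := sum_erase_abs_le_of_le_prod_round ht hs hsδ (tentMajorant_nonneg a s)
      (hasSum_tentMajorant a s).summable hmaj hγ
    rwa [(hasSum_tentMajorant a s).tsum_eq, tentMajorant, Function.update_self] at this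
  have hS : S ^ N ≤ 3 / 2 * (a ^ 2) ^ N := by
    refine add_pow_le_of_four_mul_le (by positivity) (by positivity) ?_
    rw [mul_pow] at has
    calc 4 * N * (16 / s ^ 2 * ∑' m : ℤ, 1 / (m : ℝ) ^ 2)
        = (64 * N * ∑' m : ℤ, 1 / (m : ℝ) ^ 2) / s ^ 2 := by ring
      _ ≤ a ^ 2 * s ^ 2 / s ^ 2 := by gcongr
      _ = a ^ 2 := by field_simp
  have hquad := sub_mul_sum_norm_sq_le_sum_re_mul t c (K := fun x y => W (x - y))
    (D := (a ^ 2) ^ N)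
    (fun x y => by simp only [W, ← neg_sub y x, PiLp.neg_apply, tentFourier_neg])
    (fun x _ => by simp [W, tentFourier, N]) hrow
  rw [integral_mul_norm_sq_expSum (integrable_tentProd_mul_exp (ι := ι) ha.le)]
  simp only [integral_tentProd_mul_exp ha.le, Complex.re_sum, Complex.re_mul_ofReal]
  calc (a ^ 2) ^ N / 2 * ∑ γ ∈ t, ‖c γ‖ ^ 2
      ≤ ((a ^ 2) ^ N - (S ^ N - (a ^ 2) ^ N)) * ∑ γ ∈ t, ‖c γ‖ ^ 2 := by
        gcongr
        linarith
    _ ≤ _ := hquad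

lemma integral_tentProd_mul_le {a R : ℝ} (ha : 0 ≤ a) (hR : √(Fintype.card ι) * a < R)
    {g : EuclideanSpace ℝ ι → ℝ} (hg : Continuous g) (hg0 : ∀ x, 0 ≤ g x) :
    ∫ x, tentProd a x * g x ≤ a ^ Fintype.card ι * ∫ x in Metric.ball 0 R, g x := by
  have hvanish : ∀ x ∉ Metric.ball 0 R, tentProd a x * g x = 0 := fun x hx => by
    by_contra h
    have := norm_le_of_tentProd_ne_zero ha (left_ne_zero_of_mul h)
    exact hx (mem_ball_zero_iff.2 (by linarith))
  have hint : ∀ f : EuclideanSpace ℝ ι → ℝ, Continuous f → IntegrableOn f (Metric.ball 0 R) :=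
    fun f hf => (hf.locallyIntegrable.integrableOn_isCompact (isCompact_closedBall 0 R)).mono_set
      Metric.ball_subset_closedBall
  rw [← setIntegral_eq_integral_of_forall_compl_eq_zero hvanish, ← integral_const_mul]
  exact setIntegral_mono_on (hint _ ((continuous_tentProd a).mul hg)) (hint _ (by fun_prop))
    measurableSet_ball fun x _ => mul_le_mul_of_nonneg_right (tentProd_le ha x) (hg0 x)

theorem ingham_inequality_ball {t : Finset (EuclideanSpace ℝ ι)} {δ a s R : ℝ}
    (ht : (t : Set (EuclideanSpace ℝ ι)).Pairwise fun x y => δ ≤ dist x y) (ha : 0 < a)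
    (hs : 0 < s) (hsδ : √(Fintype.card ι) * s < δ)
    (has : 64 * Fintype.card ι * ∑' m : ℤ, 1 / (m : ℝ) ^ 2 ≤ (a * s) ^ 2)
    (hR : √(Fintype.card ι) * a < R) (c : EuclideanSpace ℝ ι → ℂ) :
    a ^ Fintype.card ι / 2 * ∑ γ ∈ t, ‖c γ‖ ^ 2 ≤
      ∫ x in Metric.ball 0 R, ‖expSum t c x‖ ^ 2 := by
  refine le_of_mul_le_mul_left ?_ (by positivity : 0 < a ^ Fintype.card ι)
  calc a ^ Fintype.card ι * (a ^ Fintype.card ι / 2 * ∑ γ ∈ t, ‖c γ‖ ^ 2)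
      = (a ^ 2) ^ Fintype.card ι / 2 * ∑ γ ∈ t, ‖c γ‖ ^ 2 := by rw [pow_right_comm]; ring
    _ ≤ ∫ x, tentProd a x * ‖expSum t c x‖ ^ 2 :=
        ingham_inequality_tentProd ht ha hs hsδ has c
    _ ≤ _ := integral_tentProd_mul_le ha.le hR ((continuous_expSum t c).norm.pow 2)
        fun x => sq_nonneg _

lemma pairwise_le_dist_of_ofReal_le_setGap {n : ℕ} {X : Set (EuclideanSpace ℝ (Fin n))} {δ : ℝ}
    (h : ENNReal.ofReal δ ≤ setGap X) : X.Pairwise fun x y => δ ≤ dist x y := by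
  intro x hx y hy hxy
  have hle : setGap X ≤ edist x y :=
    (iInf_le _ (⟨x, hx⟩ : X)).trans <| (iInf_le _ (⟨y, hy⟩ : X)).trans <|
      iInf_le (fun _ => edist x y) (by simpa using hxy)
  rw [edist_dist] at hle
  exact (ENNReal.ofReal_le_ofReal_iff dist_nonneg).1 (h.trans hle)

theorem stmt8_general (n : ℕ) :
    ∃ c > (0 : ℝ), ∀ δ > (0 : ℝ), ∃ C > (0 : ℝ),
      ∀ R : ℝ, c / δ ≤ R →
        ∀ Γ : Set (EuclideanSpace ℝ (Fin n)), ENNReal.ofReal δ ≤ setGap Γ →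
          ∀ α : EuclideanSpace ℝ (Fin n) →₀ ℂ, (α.support : Set (EuclideanSpace ℝ (Fin n))) ⊆ Γ →
            C * ∑ γ ∈ α.support, ‖α γ‖ ^ 2 ≤
              ∫ x in Metric.ball (0 : EuclideanSpace ℝ (Fin n)) R,
                ‖∑ γ ∈ α.support, α γ * Complex.exp ((inner ℝ γ x : ℝ) * Complex.I)‖ ^ 2 := by
  set T := ∑' m : ℤ, 1 / (m : ℝ) ^ 2
  have hT : 0 ≤ T := tsum_nonneg fun m => by positivity
  have hsqrt : √(n : ℝ) < n + 1 := by
    rw [Real.sqrt_lt' (by positivity)]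
    nlinarith
  -- Take `s = δ / (n + 1)` and `a = A / δ`, so that `a s = 8 (n + 1) (T + 1)`.
  set A : ℝ := 8 * (n + 1) ^ 2 * (T + 1)
  refine ⟨(n + 1) * A, by positivity, fun δ hδ => ⟨(A / δ) ^ n / 2, by positivity,
    fun R hR Γ hΓ α hα => ?_⟩⟩
  have hsδ : √(n : ℝ) * (δ / (n + 1)) < δ := by
    rw [← mul_div_assoc, div_lt_iff₀ (by positivity)]
    exact mul_lt_mul_of_pos_right hsqrt hδ |>.trans_eq (mul_comm _ _)
  have has : 64 * n * T ≤ (A / δ * (δ / (n + 1))) ^ 2 := by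
    rw [show A / δ * (δ / (n + 1)) = 8 * (n + 1) * (T + 1) by
      simp only [A]
      field_simp]
    nlinarith [mul_le_mul (show (n : ℝ) ≤ (n + 1) ^ 2 by nlinarith)
      (show T ≤ (T + 1) ^ 2 by nlinarith) hT (by positivity)]
  have hR' : √(n : ℝ) * (A / δ) < R :=
    calc √(n : ℝ) * (A / δ) < (n + 1) * (A / δ) := by gcongr
      _ = (n + 1) * A / δ := by ring
      _ ≤ R := hR
  have := ingham_inequality_ball (a := A / δ) (s := δ / (n + 1))
    ((pairwise_le_dist_of_ofReal_le_setGap hΓ).mono hα) (by positivity) (by positivity)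
    (by rwa [Fintype.card_fin]) (by rwa [Fintype.card_fin]) (by rwa [Fintype.card_fin]) α
  rwa [Fintype.card_fin] at this

theorem stmt8 (n : ℕ) (hn : 1 ≤ n) :
    ∃ c > (0 : ℝ), ∀ δ > (0 : ℝ), ∃ C > (0 : ℝ),
      ∀ R : ℝ, c / δ ≤ R →
        ∀ Γ : Set (EuclideanSpace ℝ (Fin n)), ENNReal.ofReal δ ≤ setGap Γ →
          ∀ α : EuclideanSpace ℝ (Fin n) →₀ ℂ, (α.support : Set (EuclideanSpace ℝ (Fin n))) ⊆ Γ →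
            C * ∑ γ ∈ α.support, ‖α γ‖ ^ 2 ≤
              ∫ x in Metric.ball (0 : EuclideanSpace ℝ (Fin n)) R,
                ‖∑ γ ∈ α.support, α γ * Complex.exp ((inner ℝ γ x : ℝ) * Complex.I)‖ ^ 2 :=
  stmt8_general n
end

section
/- Let d ≥ 1 and let u : ℝᵈ → ℂ be a continuous function with compact support. Then ∫_{[0,1)ᵈ} ∫_{(−π,π)ᵈ} | Σ_{k ∈ ℤᵈ} exp(2πi⟨θ, k⟩) · u(y + 2πk) |² dy dθ = ∫_{ℝᵈ} |u(x)|² dx. -/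
open MeasureTheory

/-!
Only finitely many translates `u (· + 2πk)` meet the cube `Y = (-π, π)ᵈ`, so the sum over `k` is
finite there. For fixed `y`, the characters `θ ↦ e^{2πi⟨θ,k⟩}` are orthonormal on `[0,1)ᵈ`, so
after swapping the two integrals the left side becomes `∑ₖ ∫_Y |u(y + 2πk)|²`. The translates
`Y + 2πk` tile `ℝᵈ` up to a null set, which turns this sum into `∫ |u|²`.
-/

open Set Complex Bornology Topology
open scoped Real ComplexConjugate

lemma Continuous.integrableOn_of_isBounded {X E : Type*} [MetricSpace X] [ProperSpace X]
    [MeasurableSpace X] [OpensMeasurableSpace X] {μ : Measure X} [IsFiniteMeasureOnCompacts μ]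
    [NormedAddCommGroup E] {f : X → E} (hf : Continuous f) {s : Set X} (hs : IsBounded s) :
    IntegrableOn f s μ :=
  (hf.continuousOn.integrableOn_compact hs.isCompact_closure).mono_set subset_closure

lemma isBounded_univ_pi_Ico {ι : Type*} (a b : ℝ) : IsBounded (univ.pi fun _ : ι => Ico a b) :=
  IsBounded.pi fun _ => Metric.isBounded_Ico a b

noncomputable def fourierExp {ι : Type*} [Fintype ι] (k : ι → ℤ) (θ : ι → ℝ) : ℂ :=
  exp (2 * π * I * (∑ i, θ i * (k i : ℝ) : ℝ))

section Fourier

variable {ι : Type*} [Fintype ι]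

@[fun_prop]
lemma continuous_fourierExp (k : ι → ℤ) : Continuous (fourierExp k) := by
  unfold fourierExp
  fun_prop

lemma fourierExp_eq_prod (k : ι → ℤ) (θ : ι → ℝ) :
    fourierExp k θ = ∏ i, exp (2 * π * I * k i * θ i) := by
  rw [fourierExp, ← exp_sum]
  push_cast
  rw [Finset.mul_sum]
  exact congrArg exp (Finset.sum_congr rfl fun i _ => by ring)

lemma fourierExp_mul_conj (k l : ι → ℤ) (θ : ι → ℝ) :
    fourierExp k θ * conj (fourierExp l θ) = fourierExp (k - l) θ := by
  simp only [fourierExp, ← exp_conj, ← exp_add, map_mul, conj_ofReal, conj_I, map_ofNat,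
    Pi.sub_apply, Int.cast_sub, ofReal_sub, mul_sub, Finset.sum_sub_distrib]
  ring_nf

lemma integral_Ico_exp_two_pi_I_int_mul (m : ℤ) :
    ∫ t in Ico (0 : ℝ) 1, exp (2 * π * I * m * t) = if m = 0 then 1 else 0 := by
  rw [Measure.restrict_congr_set Ico_ae_eq_Ioc, ← intervalIntegral.integral_of_le zero_le_one]
  split_ifs with hm
  · simp [hm]
  · have hc : 2 * π * I * m ≠ 0 := by simp [Real.pi_ne_zero, I_ne_zero, hm]
    rw [integral_exp_mul_complex hc, ofReal_one, mul_one, ofReal_zero, mul_zero, exp_zero,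
      show 2 * π * I * m = m * (2 * π * I) by ring, exp_int_mul_two_pi_mul_I, sub_self, zero_div]

lemma setIntegral_fourierExp (m : ι → ℤ) :
    ∫ θ in univ.pi fun _ => Ico (0 : ℝ) 1, fourierExp m θ = if m = 0 then 1 else 0 := by
  simp_rw [fourierExp_eq_prod, volume_pi, Measure.restrict_pi_pi]
  rw [integral_fintype_prod_eq_prod (fun i (t : ℝ) => exp (2 * π * I * m i * t))]
  simp_rw [integral_Ico_exp_two_pi_I_int_mul, Fintype.prod_boole, funext_iff, Pi.zero_apply]

lemma setIntegral_norm_sum_fourierExp_mul_sq (K : Finset (ι → ℤ)) (a : (ι → ℤ) → ℂ) :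
    ∫ θ in univ.pi fun _ => Ico (0 : ℝ) 1, ‖∑ k ∈ K, fourierExp k θ * a k‖ ^ 2 =
      ∑ k ∈ K, ‖a k‖ ^ 2 := by
  have expand : ∀ θ, ((‖∑ k ∈ K, fourierExp k θ * a k‖ ^ 2 : ℝ) : ℂ) =
      ∑ k ∈ K, ∑ l ∈ K, fourierExp (k - l) θ * (a k * conj (a l)) := by
    intro θ
    rw [ofReal_pow, ← mul_conj', map_sum, Finset.sum_mul_sum]
    refine Finset.sum_congr rfl fun k _ => Finset.sum_congr rfl fun l _ => ?_
    rw [map_mul, ← fourierExp_mul_conj]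
    ring
  have hint : ∀ m c,
      IntegrableOn (fun θ : ι → ℝ => fourierExp m θ * c) (univ.pi fun _ => Ico (0 : ℝ) 1) :=
    fun m c => ((continuous_fourierExp m).mul_const c).integrableOn_of_isBounded
      (isBounded_univ_pi_Ico (ι := ι) 0 1)
  apply ofReal_injective
  rw [← integral_complex_ofReal]
  simp_rw [expand]
  rw [integral_finsetSum _ fun k _ => integrable_finsetSum _ fun l _ => hint _ _]
  push_cast
  refine Finset.sum_congr rfl fun k hk => ?_
  rw [integral_finsetSum _ fun l _ => hint _ _]
  simp_rw [integral_mul_const, setIntegral_fourierExp, sub_eq_zero, ite_mul, one_mul, zero_mul,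
    Finset.sum_ite_eq, if_pos hk, mul_conj']

end Fourier

lemma existsUnique_sub_two_mul_int_mul_mem_Ico {r : ℝ} (hr : 0 < r) (x : ℝ) :
    ∃! m : ℤ, x - 2 * r * m ∈ Ico (-r) r := by
  have h := existsUnique_sub_zsmul_mem_Ico (by positivity : 0 < 2 * r) x (-r)
  rw [show -r + 2 * r = r by ring] at h
  simpa only [zsmul_eq_mul, mul_comm] using h

section Tiling

variable {ι E : Type*} [Fintype ι] [NormedAddCommGroup E] [NormedSpace ℝ E]

lemma integral_eq_tsum_setIntegral_univ_pi_Ico {r : ℝ} (hr : 0 < r) {f : (ι → ℝ) → E}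
    (hf : Integrable f) :
    ∫ x, f x = ∑' k : ι → ℤ, ∫ y in univ.pi fun _ => Ico (-r) r, f (y + fun i => 2 * r * k i) := by
  set C := univ.pi fun _ : ι => Ico (-r) r
  set v : (ι → ℤ) → ι → ℝ := fun k i => 2 * r * k i
  set T : (ι → ℤ) → Set (ι → ℝ) := fun k => (· - v k) ⁻¹' C
  have mem_T : ∀ x k, x ∈ T k ↔ ∀ i, x i - 2 * r * k i ∈ Ico (-r) r := by simp [T, C, v]
  have hcover : ⋃ k, T k = univ := by
    refine eq_univ_of_forall fun x => mem_iUnion.2 ?_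
    choose k hk using fun i => (existsUnique_sub_two_mul_int_mul_mem_Ico hr (x i)).exists
    exact ⟨k, (mem_T x k).2 hk⟩
  have hdisj : Pairwise (Function.onFun Disjoint T) := fun k l hkl =>
    disjoint_left.2 fun x hk hl => hkl <| funext fun i =>
      (existsUnique_sub_two_mul_int_mul_mem_Ico hr (x i)).unique
        ((mem_T x k).1 hk i) ((mem_T x l).1 hl i)
  have setIntegral_T : ∀ k, ∫ x in T k, f x = ∫ y in C, f (y + v k) := fun k => by
    have hpre : (· + v k) ⁻¹' T k = C := by ext y; simp [T]
    rw [← hpre, (measurePreserving_add_right volume (v k)).setIntegral_preimage_emb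
      (measurableEmbedding_addRight (v k))]
  have hTm : ∀ k, MeasurableSet (T k) := fun k =>
    (MeasurableSet.univ_pi fun _ => measurableSet_Ico).preimage (measurable_sub_const _)
  rw [← setIntegral_univ, ← hcover, integral_iUnion hTm hdisj hf.integrableOn]
  exact tsum_congr setIntegral_T

lemma integral_eq_tsum_setIntegral_univ_pi_Ioo {r : ℝ} (hr : 0 < r) {f : (ι → ℝ) → E}
    (hf : Integrable f) :
    ∫ x, f x = ∑' k : ι → ℤ, ∫ y in univ.pi fun _ => Ioo (-r) r, f (y + fun i => 2 * r * k i) := by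
  have hae : (univ.pi fun _ : ι => Ioo (-r) r) =ᵐ[volume] univ.pi fun _ => Ico (-r) r :=
    Measure.univ_pi_Ioo_ae_eq_Icc.trans Measure.univ_pi_Ico_ae_eq_Icc.symm
  simp_rw [setIntegral_congr_set hae]
  exact integral_eq_tsum_setIntegral_univ_pi_Ico hr hf

end Tiling

lemma finite_setOf_exists_add_int_mul_ne_zero {ι E : Type*} [Fintype ι] [Zero E]
    {u : (ι → ℝ) → E} (hu : HasCompactSupport u) {Y : Set (ι → ℝ)} (hY : IsBounded Y)
    {c : ℝ} (hc : c ≠ 0) :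
    {k : ι → ℤ | ∃ y ∈ Y, u (y + fun i => c * k i) ≠ 0}.Finite := by
  have hemb : IsClosedEmbedding fun (k : ι → ℤ) (i : ι) => c * k i :=
    (Homeomorph.smulOfNeZero c hc).isClosedEmbedding.comp
      (.piMap fun _ => Int.isClosedEmbedding_coe_real)
  refine (hemb.isCompact_preimage (hu.isCompact.add hY.isCompact_closure.neg)).finite_of_discrete
    |>.subset ?_
  rintro k ⟨y, hy, hne⟩
  exact ⟨_, subset_tsupport u hne, -y, by simpa using subset_closure hy, by simp⟩

lemma setIntegral_setIntegral_norm_tsum_fourierExp_mul_sq {ι ι' : Type*} [Fintype ι] [Fintype ι']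
    {Y : Set (ι' → ℝ)} (hYb : IsBounded Y) (hYm : MeasurableSet Y)
    {v : (ι → ℤ) → (ι' → ℝ) → ℂ} (hv : ∀ k, Continuous (v k))
    {K : Finset (ι → ℤ)} (hK : ∀ y ∈ Y, ∀ k ∉ K, v k y = 0) :
    ∫ θ in univ.pi fun _ => Ico (0 : ℝ) 1, ∫ y in Y, ‖∑' k, fourierExp k θ * v k y‖ ^ 2 =
      ∑' k, ∫ y in Y, ‖v k y‖ ^ 2 := by
  set Θ := univ.pi fun _ : ι => Ico (0 : ℝ) 1
  calc ∫ θ in Θ, ∫ y in Y, ‖∑' k, fourierExp k θ * v k y‖ ^ 2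
      = ∫ θ in Θ, ∫ y in Y, ‖∑ k ∈ K, fourierExp k θ * v k y‖ ^ 2 := by
        refine setIntegral_congr_fun (MeasurableSet.univ_pi fun _ => measurableSet_Ico)
          fun θ _ => setIntegral_congr_fun hYm fun y hy => ?_
        rw [tsum_eq_sum fun k hk => by rw [hK y hy k hk, mul_zero]]
    _ = ∫ y in Y, ∫ θ in Θ, ‖∑ k ∈ K, fourierExp k θ * v k y‖ ^ 2 := by
        refine integral_integral_swap ?_
        rw [Measure.prod_restrict, ← Measure.volume_eq_prod]
        refine Continuous.integrableOn_of_isBounded ?_ ((isBounded_univ_pi_Ico 0 1).prod hYb)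
        fun_prop
    _ = ∫ y in Y, ∑ k ∈ K, ‖v k y‖ ^ 2 := by
        congr with y
        exact setIntegral_norm_sum_fourierExp_mul_sq K _
    _ = ∑ k ∈ K, ∫ y in Y, ‖v k y‖ ^ 2 :=
        integral_finsetSum _ fun k _ => ((hv k).norm.pow 2).integrableOn_of_isBounded hYb
    _ = ∑' k, ∫ y in Y, ‖v k y‖ ^ 2 := (tsum_eq_sum fun k hk =>
        setIntegral_eq_zero_of_forall_eq_zero fun y hy => by simp [hK y hy k hk]).symm

theorem stmt12_general (d : ℕ) (u : (Fin d → ℝ) → ℂ)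
    (hu_cont : Continuous u) (hu_supp : HasCompactSupport u) :
    ∫ θ in Set.univ.pi fun _ : Fin d => Set.Ico (0 : ℝ) 1,
      ∫ y in Set.univ.pi fun _ : Fin d => Set.Ioo (-Real.pi) Real.pi,
        ‖∑' k : Fin d → ℤ,
            Complex.exp (2 * Real.pi * Complex.I * (∑ i : Fin d, θ i * (k i : ℝ) : ℝ)) *
              u (y + fun i => 2 * Real.pi * (k i : ℝ))‖ ^ 2
      = ∫ x : Fin d → ℝ, ‖u x‖ ^ 2 := by
  have hY : IsBounded (univ.pi fun _ : Fin d => Ioo (-π) π) :=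
    (isBounded_univ_pi_Ico (-π) π).subset (pi_mono fun _ _ => Ioo_subset_Ico_self)
  have hfin := finite_setOf_exists_add_int_mul_ne_zero hu_supp hY (c := 2 * π) (by positivity)
  refine (setIntegral_setIntegral_norm_tsum_fourierExp_mul_sq hY
    (MeasurableSet.univ_pi fun _ => measurableSet_Ioo) (K := hfin.toFinset)
    (v := fun k y => u (y + fun i => 2 * π * k i)) (fun k => hu_cont.comp (continuous_add_const _))
    fun y hy k hk => not_not.1 fun hne => hk (hfin.mem_toFinset.2 ⟨y, hy, hne⟩)).trans ?_
  exact (integral_eq_tsum_setIntegral_univ_pi_Ioo Real.pi_pos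
    ((hu_cont.memLp_of_hasCompactSupport hu_supp).integrable_norm_pow two_ne_zero)).symm

theorem stmt12 (d : ℕ) (hd : 1 ≤ d) (u : (Fin d → ℝ) → ℂ)
    (hu_cont : Continuous u) (hu_supp : HasCompactSupport u) :
    ∫ θ in Set.univ.pi fun _ : Fin d => Set.Ico (0 : ℝ) 1,
      ∫ y in Set.univ.pi fun _ : Fin d => Set.Ioo (-Real.pi) Real.pi,
        ‖∑' k : Fin d → ℤ,
            Complex.exp (2 * Real.pi * Complex.I * (∑ i : Fin d, θ i * (k i : ℝ) : ℝ)) *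
              u (y + fun i => 2 * Real.pi * (k i : ℝ))‖ ^ 2
      = ∫ x : Fin d → ℝ, ‖u x‖ ^ 2 :=
  stmt12_general d u hu_cont hu_supp
end
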